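/- Let (Ω̄, 𝒢) be a measurable space, 𝒬 a nonempty convex set of probability measures on (Ω̄, 𝒢), and Y : Ω̄ → ℝ^d a 𝒢-measurable random variable. Then the one-period no-arbitrage condition NA(𝒬) holds if and only if the one-period quantitative no-arbitrage condition holds, i.e. there exist constants β, κ ∈ (0,1] such that for every h ∈ Aff(D) with h ≠ 0 there exists P_h ∈ 𝒬 satisfying P_h(h·Y < −β|h|) ≥ κ. -/

import Mathlib

/-!
Quasi-sure statements `h·Y ≥ 0` and `h·Y = 0` concern closed sets of values, so they hold iff
they hold on the quasi-sure support `D`. Hence `NA(𝒬)` says that no nonzero `h` in the span of `D`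
is nonnegative on `D`. The span may be replaced by `Aff(D)`: the foot of the perpendicular from `0`
to `Aff(D)` is nonnegative on `D`, which forces `0 ∈ Aff(D)`.

If the quantitative bound failed, there would be unit vectors `g_n` in the span of `D` with
`P(g_n·Y < -1/(n+1)) < 1/(n+1)` for all `P ∈ 𝒬`. A limit point `a` of the `g_n` is a unit vector
with `a·Y ≥ 0` quasi-surely, since each `ω` with `a·Y(ω) < 0` eventually lies in these sets of
vanishing measure. Conversely, the bound gives every nonzero `h ∈ Aff(D)` a prior under which
`h·Y < 0` with positive probability, so `h` is not nonnegative on `D`.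
-/

open MeasureTheory Set
open scoped ENNReal

/-- The quasi-sure support of `Y` under the family of priors `𝒬`. -/
def qsSupport {Ω : Type*} [MeasurableSpace Ω] {d : ℕ} (𝒬 : Set (Measure Ω))
    (Y : Ω → EuclideanSpace ℝ (Fin d)) : Set (EuclideanSpace ℝ (Fin d)) :=
  ⋂₀ {A : Set (EuclideanSpace ℝ (Fin d)) | IsClosed A ∧ ∀ P ∈ 𝒬, P (Y ⁻¹' A) = 1}

/-- One-period no-arbitrage condition `NA(𝒬)`. -/
def NAcond {Ω : Type*} [MeasurableSpace Ω] {d : ℕ} (𝒬 : Set (Measure Ω))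
    (Y : Ω → EuclideanSpace ℝ (Fin d)) : Prop :=
  ∀ h : EuclideanSpace ℝ (Fin d),
    (∀ P ∈ 𝒬, ∀ᵐ ω ∂P, 0 ≤ (inner ℝ h (Y ω) : ℝ)) →
    ∀ P ∈ 𝒬, ∀ᵐ ω ∂P, (inner ℝ h (Y ω) : ℝ) = 0

/-- Convexity of a set of measures. -/
def ConvexMeasSet {Ω : Type*} [MeasurableSpace Ω] (𝒬 : Set (Measure Ω)) : Prop :=
  ∀ P ∈ 𝒬, ∀ Q ∈ 𝒬, ∀ t : ℝ≥0∞, t ≤ 1 → t • P + (1 - t) • Q ∈ 𝒬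

open Filter Topology

section Geometry

variable {E : Type*} [NormedAddCommGroup E] [InnerProductSpace ℝ E]

def NoArbitrage (s : Set E) : Prop :=
  ∀ h : E, (∀ y ∈ s, 0 ≤ (inner ℝ h y : ℝ)) → ∀ y ∈ s, (inner ℝ h y : ℝ) = 0

variable [FiniteDimensional ℝ E] {s : Set E}

theorem noArbitrage_iff_forall_mem_span :
    NoArbitrage s ↔ ∀ h ∈ Submodule.span ℝ s, (∀ y ∈ s, 0 ≤ (inner ℝ h y : ℝ)) → h = 0 := by
  constructor
  · intro hNA h hspan hnonneg
    have hker : Submodule.span ℝ s ≤ LinearMap.ker (innerₛₗ ℝ h) :=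
      Submodule.span_le.2 fun y hy => hNA h hnonneg y hy
    exact inner_self_eq_zero.1 (hker hspan)
  · intro H h hnonneg y hy
    set K := Submodule.span ℝ s
    have hproj : ∀ y ∈ s, (inner ℝ (K.starProjection h) y : ℝ) = inner ℝ h y := fun y hy => by
      rw [Submodule.inner_starProjection_left_eq_right,
        K.starProjection_eq_self_iff.2 (Submodule.subset_span hy)]
    have hzero : K.starProjection h = 0 :=
      H _ (K.starProjection_apply_mem h) fun y hy => (hproj y hy).symm ▸ hnonneg y hy
    rw [← hproj y hy, hzero, inner_zero_left]

theorem zero_mem_affineSpan_of_forall_inner_nonneg_imp_eq_zero (hs : s.Nonempty)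
    (H : ∀ h ∈ affineSpan ℝ s, (∀ y ∈ s, 0 ≤ (inner ℝ h y : ℝ)) → h = 0) :
    (0 : E) ∈ affineSpan ℝ s := by
  set A := affineSpan ℝ s
  have : Nonempty A := ((affineSpan_nonempty ℝ).2 hs).to_subtype
  set w : E := (EuclideanGeometry.orthogonalProjection A (0 : E) : E)
  have hwA : w ∈ A := EuclideanGeometry.orthogonalProjection_mem 0
  have hw : ∀ y ∈ A, (inner ℝ w y : ℝ) = inner ℝ w w := fun y hy => by
    have := Submodule.inner_right_of_mem_orthogonal (AffineSubspace.vsub_mem_direction hy hwA)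
      (EuclideanGeometry.vsub_orthogonalProjection_mem_direction_orthogonal A (0 : E))
    simp only [vsub_eq_sub, zero_sub, inner_neg_right, inner_sub_left, neg_eq_zero] at this
    rw [real_inner_comm]; linarith
  have hw0 : w = 0 := H w hwA fun y hy => by
    rw [hw y (subset_affineSpan ℝ s hy)]; exact real_inner_self_nonneg
  exact hw0 ▸ hwA

theorem noArbitrage_iff_forall_mem_affineSpan :
    NoArbitrage s ↔ ∀ h ∈ affineSpan ℝ s, (∀ y ∈ s, 0 ≤ (inner ℝ h y : ℝ)) → h = 0 := by
  rw [noArbitrage_iff_forall_mem_span]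
  refine ⟨fun H h hh => H h (affineSpan_subset_span hh), fun H h hh => ?_⟩
  rcases s.eq_empty_or_nonempty with rfl | hs
  · rw [Submodule.span_empty, Submodule.mem_bot] at hh
    exact fun _ => hh
  · rw [← SetLike.mem_coe, ← affineSpan_insert_zero, affineSpan_insert_eq_affineSpan ℝ
      (zero_mem_affineSpan_of_forall_inner_nonneg_imp_eq_zero hs H)] at hh
    exact H h hh

end Geometry

theorem measure_setOf_eventually_mem_eq_zero {α : Type*} [MeasurableSpace α] {μ : Measure α}
    {E : ℕ → Set α} (hE : Tendsto (fun n => μ (E n)) atTop (𝓝 0)) :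
    μ {x | ∀ᶠ n in atTop, x ∈ E n} = 0 := by
  have hset : {x | ∀ᶠ n in atTop, x ∈ E n} = ⋃ N, ⋂ n ≥ N, E n := by
    ext x; simp [eventually_atTop]
  rw [hset]
  refine measure_iUnion_null fun N => le_antisymm ?_ zero_le
  exact ge_of_tendsto hE
    (eventually_atTop.2 ⟨N, fun n hn => measure_mono (biInter_subset_of_mem hn)⟩)

theorem exists_uniform_measure_inner_lt_bound {Ω E : Type*} [MeasurableSpace Ω]
    [NormedAddCommGroup E] [InnerProductSpace ℝ E] [FiniteDimensional ℝ E]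
    (𝒬 : Set (Measure Ω)) (Y : Ω → E) (V : Submodule ℝ E)
    (hV : ∀ a ∈ V, (∀ P ∈ 𝒬, ∀ᵐ ω ∂P, 0 ≤ (inner ℝ a (Y ω) : ℝ)) → a = 0) :
    ∃ β κ : ℝ, 0 < β ∧ β ≤ 1 ∧ 0 < κ ∧ κ ≤ 1 ∧ ∀ h ∈ V, h ≠ 0 →
      ∃ P ∈ 𝒬, ENNReal.ofReal κ ≤ P {ω | (inner ℝ h (Y ω) : ℝ) < -β * ‖h‖} := by
  set ε : ℕ → ℝ := fun n => 1 / ((n : ℝ) + 1)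
  by_contra hneg
  have hsmall : ∀ n, ∃ g ∈ V, ‖g‖ = 1 ∧
      ∀ P ∈ 𝒬, P {ω | (inner ℝ g (Y ω) : ℝ) < -ε n} < ENNReal.ofReal (ε n) := by
    intro n
    by_contra! hbig
    have hε : 0 < ε n := Nat.one_div_pos_of_nat
    have hε1 : ε n ≤ 1 := Nat.one_div_le_one_div (Nat.zero_le n) |>.trans_eq (by simp)
    refine hneg ⟨ε n, ε n, hε, hε1, hε, hε1, fun h hhV hh0 => ?_⟩
    have hnorm : 0 < ‖h‖ := norm_pos_iff.2 hh0
    obtain ⟨P, hP, hPbig⟩ := hbig (‖h‖⁻¹ • h) (V.smul_mem _ hhV)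
      (by rw [norm_smul, norm_inv, norm_norm, inv_mul_cancel₀ hnorm.ne'])
    refine ⟨P, hP, hPbig.trans_eq (congrArg P (Set.ext fun ω => ?_))⟩
    change inner ℝ (‖h‖⁻¹ • h) (Y ω) < -ε n ↔ inner ℝ h (Y ω) < -ε n * ‖h‖
    rw [real_inner_smul_left, inv_mul_lt_iff₀ hnorm, mul_comm]
  choose g hgV hgnorm hgsmall using hsmall
  obtain ⟨a, ⟨ha, haV⟩, φ, hφ, hlim⟩ :=
    ((isCompact_sphere (0 : E) 1).inter_right V.closed_of_finiteDimensional).tendsto_subseq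
      (x := g) fun n => ⟨by simpa using hgnorm n, hgV n⟩
  have hεφ : Tendsto (fun n => ε (φ n)) atTop (𝓝 0) :=
    tendsto_one_div_add_atTop_nhds_zero_nat.comp hφ.tendsto_atTop
  have hnonneg : ∀ P ∈ 𝒬, ∀ᵐ ω ∂P, 0 ≤ (inner ℝ a (Y ω) : ℝ) := by
    intro P hP
    refine measure_mono_null (fun ω hω => ?_) (measure_setOf_eventually_mem_eq_zero
      (E := fun n => {ω | (inner ℝ (g (φ n)) (Y ω) : ℝ) < -ε (φ n)}) ?_)
    · exact (hlim.inner tendsto_const_nhds).eventually_lt hεφ.neg (by simpa using hω)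
    · refine tendsto_of_tendsto_of_tendsto_of_le_of_le tendsto_const_nhds ?_
        (fun _ => zero_le) fun n => (hgsmall (φ n) P hP).le
      simpa using ENNReal.tendsto_ofReal hεφ
  simp [hV a haV hnonneg] at ha

theorem eq_zero_of_ae_inner_nonneg {Ω E : Type*} [MeasurableSpace Ω]
    [NormedAddCommGroup E] [InnerProductSpace ℝ E] {μ : Measure Ω} {Y : Ω → E} {h : E}
    {β κ : ℝ} (hβ : 0 < β) (hκ : 0 < κ)
    (hμ : ENNReal.ofReal κ ≤ μ {ω | (inner ℝ h (Y ω) : ℝ) < -β * ‖h‖})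
    (hae : ∀ᵐ ω ∂μ, 0 ≤ (inner ℝ h (Y ω) : ℝ)) : h = 0 := by
  by_contra hh0
  have hneg : -β * ‖h‖ < 0 := mul_neg_of_neg_of_pos (neg_neg_of_pos hβ) (norm_pos_iff.2 hh0)
  have hnull : μ {ω | (inner ℝ h (Y ω) : ℝ) < -β * ‖h‖} = 0 :=
    measure_mono_null (fun ω hω => (hω.trans hneg).not_ge) hae
  exact (ENNReal.ofReal_pos.2 hκ).not_ge (hμ.trans hnull.le)

section QuasiSureSupport

variable {Ω : Type*} [MeasurableSpace Ω] {d : ℕ} {𝒬 : Set (Measure Ω)}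
  {Y : Ω → EuclideanSpace ℝ (Fin d)}

theorem ae_mem_qsSupport (h𝒬prob : ∀ P ∈ 𝒬, IsProbabilityMeasure P) (hY : Measurable Y)
    {P : Measure Ω} (hP : P ∈ 𝒬) : ∀ᵐ ω ∂P, Y ω ∈ qsSupport 𝒬 Y := by
  have := h𝒬prob P hP
  set S := {A : Set (EuclideanSpace ℝ (Fin d)) | IsClosed A ∧ ∀ P ∈ 𝒬, P (Y ⁻¹' A) = 1}
  obtain ⟨T, hTc, hTS, hT⟩ := TopologicalSpace.isOpen_sUnion_countable (compl '' S)
    (by rintro _ ⟨A, hA, rfl⟩; exact hA.1.isOpen_compl)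
  have hcompl : (qsSupport 𝒬 Y)ᶜ = ⋃₀ T := by rw [hT, qsSupport, compl_sInter]
  change P (Y ⁻¹' (qsSupport 𝒬 Y)ᶜ) = 0
  rw [hcompl, preimage_sUnion, measure_biUnion_null_iff hTc]
  rintro _ ht
  obtain ⟨A, hA, rfl⟩ := hTS ht
  exact (prob_compl_eq_zero_iff (hY hA.1.measurableSet)).2 (hA.2 P hP)

theorem forall_ae_mem_iff_qsSupport_subset (h𝒬prob : ∀ P ∈ 𝒬, IsProbabilityMeasure P)
    (hY : Measurable Y) {A : Set (EuclideanSpace ℝ (Fin d))} (hA : IsClosed A) :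
    (∀ P ∈ 𝒬, ∀ᵐ ω ∂P, Y ω ∈ A) ↔ qsSupport 𝒬 Y ⊆ A := by
  refine ⟨fun hae => sInter_subset_of_mem ⟨hA, fun P hP => ?_⟩, fun hsub P hP => ?_⟩
  · have := h𝒬prob P hP
    rw [← measure_univ (μ := P)]
    exact (ae_mem_iff_measure_eq (hY hA.measurableSet).nullMeasurableSet).1 (hae P hP)
  · filter_upwards [ae_mem_qsSupport h𝒬prob hY hP] with ω hω using hsub hω

theorem forall_ae_inner_nonneg_iff (h𝒬prob : ∀ P ∈ 𝒬, IsProbabilityMeasure P)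
    (hY : Measurable Y) (h : EuclideanSpace ℝ (Fin d)) :
    (∀ P ∈ 𝒬, ∀ᵐ ω ∂P, 0 ≤ (inner ℝ h (Y ω) : ℝ)) ↔ ∀ y ∈ qsSupport 𝒬 Y, 0 ≤ (inner ℝ h y : ℝ) :=
  forall_ae_mem_iff_qsSupport_subset h𝒬prob hY (A := {y | 0 ≤ (inner ℝ h y : ℝ)})
    (isClosed_le continuous_const (continuous_const.inner continuous_id))

theorem forall_ae_inner_eq_zero_iff (h𝒬prob : ∀ P ∈ 𝒬, IsProbabilityMeasure P)
    (hY : Measurable Y) (h : EuclideanSpace ℝ (Fin d)) :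
    (∀ P ∈ 𝒬, ∀ᵐ ω ∂P, (inner ℝ h (Y ω) : ℝ) = 0) ↔ ∀ y ∈ qsSupport 𝒬 Y, (inner ℝ h y : ℝ) = 0 :=
  forall_ae_mem_iff_qsSupport_subset h𝒬prob hY (A := {y | (inner ℝ h y : ℝ) = 0})
    (isClosed_eq (continuous_const.inner continuous_id) continuous_const)

theorem nacond_iff_noArbitrage_qsSupport (h𝒬prob : ∀ P ∈ 𝒬, IsProbabilityMeasure P)
    (hY : Measurable Y) : NAcond 𝒬 Y ↔ NoArbitrage (qsSupport 𝒬 Y) :=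
  forall_congr' fun h =>
    imp_congr (forall_ae_inner_nonneg_iff h𝒬prob hY h) (forall_ae_inner_eq_zero_iff h𝒬prob hY h)

end QuasiSureSupport

theorem na_iff_quantitative_general
    {Ω : Type*} [MeasurableSpace Ω] {d : ℕ}
    (𝒬 : Set (Measure Ω))
    (h𝒬prob : ∀ P ∈ 𝒬, IsProbabilityMeasure P)
    (Y : Ω → EuclideanSpace ℝ (Fin d)) (hY : Measurable Y) :
    NAcond 𝒬 Y ↔
      ∃ β κ : ℝ, 0 < β ∧ β ≤ 1 ∧ 0 < κ ∧ κ ≤ 1 ∧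
        ∀ h : EuclideanSpace ℝ (Fin d),
          h ∈ affineSpan ℝ (qsSupport 𝒬 Y) → h ≠ 0 →
          ∃ P ∈ 𝒬, ENNReal.ofReal κ ≤ P {ω | (inner ℝ h (Y ω) : ℝ) < -β * ‖h‖} := by
  rw [nacond_iff_noArbitrage_qsSupport h𝒬prob hY]
  constructor
  · intro hNA
    obtain ⟨β, κ, hβ, hβ1, hκ, hκ1, H⟩ :=
      exists_uniform_measure_inner_lt_bound 𝒬 Y (Submodule.span ℝ (qsSupport 𝒬 Y))
        fun a ha hnonneg => noArbitrage_iff_forall_mem_span.1 hNA a ha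
          ((forall_ae_inner_nonneg_iff h𝒬prob hY a).1 hnonneg)
    exact ⟨β, κ, hβ, hβ1, hκ, hκ1, fun h hh => H h (affineSpan_subset_span hh)⟩
  · rintro ⟨β, κ, hβ, -, hκ, -, H⟩
    refine noArbitrage_iff_forall_mem_affineSpan.2 fun h hh hnonneg => by_contra fun hh0 => ?_
    obtain ⟨P, hP, hPκ⟩ := H h hh hh0
    exact hh0 (eq_zero_of_ae_inner_nonneg hβ hκ hPκ
      ((forall_ae_inner_nonneg_iff h𝒬prob hY h).2 hnonneg P hP))

/-- NA(𝒬) is equivalent to the quantitative no-arbitrage condition: there are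
`β, κ ∈ (0,1]` such that every nonzero `h` in `Aff(D)` admits a prior `P_h ∈ 𝒬`
with `P_h(h·Y < -β|h|) ≥ κ`. -/
theorem na_iff_quantitative
    {Ω : Type*} [MeasurableSpace Ω] {d : ℕ}
    (𝒬 : Set (Measure Ω)) (h𝒬ne : 𝒬.Nonempty)
    (h𝒬prob : ∀ P ∈ 𝒬, IsProbabilityMeasure P)
    (h𝒬conv : ConvexMeasSet 𝒬)
    (Y : Ω → EuclideanSpace ℝ (Fin d)) (hY : Measurable Y) :
    NAcond 𝒬 Y ↔
      ∃ β κ : ℝ, 0 < β ∧ β ≤ 1 ∧ 0 < κ ∧ κ ≤ 1 ∧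
        ∀ h : EuclideanSpace ℝ (Fin d),
          h ∈ affineSpan ℝ (qsSupport 𝒬 Y) → h ≠ 0 →
          ∃ P ∈ 𝒬, ENNReal.ofReal κ ≤ P {ω | (inner ℝ h (Y ω) : ℝ) < -β * ‖h‖} :=
  na_iff_quantitative_general 𝒬 h𝒬prob Y hY
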